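/- arXiv:2511.10495 — 7 statements merged into one kernel-verified Lean document; each statement's English description precedes it below -/
import Mathlib

section
/- For the algebra E ⊕ E^op with the exchange involution, the commutator of any two symmetric elements is central: if u, v ∈ E ⊕ E^op satisfy u^* = u and v^* = v (where (a,b)^* = (b,a)), then [u,v] = uv - vu lies in the center of E ⊕ E^op. Moreover there exist symmetric u, v with [u,v] ≠ 0. -/
/-!
In an exterior algebra the even part is central, since a generator `ι m` supercommutes with
everything: `ι m * x = involute x * ι m`. Writing `a = a₀ + a₁` and `b = b₀ + b₁` in even and
odd parts, `[a, b] = [a₁, b₁]`, a difference of even elements, hence central. So every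
commutator of `E`, of `Eᵐᵒᵖ`, and therefore of `E × Eᵐᵒᵖ` is central.
For the second claim, `[e₀, e₁] = 2 e₀ e₁ ≠ 0`, detected by pairing `e₀ ∧ e₁` with the
dual forms `e₀^* ∧ e₁^*`.
-/

open MulOpposite

/-- The infinite-dimensional Grassmann (exterior) algebra over `F`. -/
noncomputable abbrev GrassmannAlg (F : Type*) [Field F] :=
  ExteriorAlgebra F (ℕ →₀ F)

/-- The exchange involution on `E ⊕ E^op`: `(a, b)* = (b, a)`. -/
def excInv {F : Type*} [Field F] (x : GrassmannAlg F × (GrassmannAlg F)ᵐᵒᵖ) :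
    GrassmannAlg F × (GrassmannAlg F)ᵐᵒᵖ :=
  (x.2.unop, op x.1)

namespace ExteriorAlgebra

open CliffordAlgebra

variable {R M : Type*} [CommRing R] [AddCommGroup M] [Module R M]

theorem ι_mul_eq_involute_mul_ι (m : M) (x : ExteriorAlgebra R M) :
    ι R m * x = involute x * ι R m := by
  induction x using CliffordAlgebra.induction with
  | algebraMap r => simp [Algebra.commutes]
  | ι n => rw [involute_ι, neg_mul, eq_neg_iff_add_eq_zero, ι_add_mul_swap]
  | mul a b ha hb => rw [← mul_assoc, ha, mul_assoc, hb, map_mul, mul_assoc]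
  | add a b ha hb => rw [mul_add, ha, hb, map_add, add_mul]

theorem mem_center_of_involute_eq {x : ExteriorAlgebra R M} (hx : involute x = x) :
    x ∈ Set.center (ExteriorAlgebra R M) := by
  refine Semigroup.mem_center_iff.mpr fun g => ?_
  induction g using CliffordAlgebra.induction with
  | algebraMap r => exact Algebra.commutes r x
  | ι m => rw [ι_mul_eq_involute_mul_ι, hx]
  | mul a b ha hb => rw [mul_assoc, hb, ← mul_assoc, ha, mul_assoc]
  | add a b ha hb => rw [add_mul, ha, hb, mul_add]

theorem mem_center_of_mem_even {x : ExteriorAlgebra R M}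
    (hx : x ∈ evenOdd (0 : QuadraticForm R M) 0) :
    x ∈ Set.center (ExteriorAlgebra R M) :=
  mem_center_of_involute_eq (involute_eq_of_mem_even hx)

theorem exists_even_add_odd (x : ExteriorAlgebra R M) :
    ∃ x₀ ∈ evenOdd (0 : QuadraticForm R M) 0, ∃ x₁ ∈ evenOdd (0 : QuadraticForm R M) 1,
      x₀ + x₁ = x :=
  Submodule.mem_sup.mp <|
    (evenOdd_isCompl (0 : QuadraticForm R M)).sup_eq_top ▸ Submodule.mem_top

theorem odd_mul_odd_mem_even {x y : ExteriorAlgebra R M} (hx : x ∈ evenOdd 0 1)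
    (hy : y ∈ evenOdd 0 1) : x * y ∈ evenOdd (0 : QuadraticForm R M) 0 :=
  evenOdd_mul_le _ 1 1 (Submodule.mul_mem_mul hx hy)

theorem mul_sub_mul_mem_center (a b : ExteriorAlgebra R M) :
    a * b - b * a ∈ Set.center (ExteriorAlgebra R M) := by
  obtain ⟨a₀, ha₀, a₁, ha₁, rfl⟩ := exists_even_add_odd a
  obtain ⟨b₀, hb₀, b₁, hb₁, rfl⟩ := exists_even_add_odd b
  have hab : (a₀ + a₁) * (b₀ + b₁) - (b₀ + b₁) * (a₀ + a₁) = a₁ * b₁ - b₁ * a₁ := by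
    have ha₀c := mem_center_of_mem_even ha₀
    have hb₀c := mem_center_of_mem_even hb₀
    simp only [add_mul, mul_add]
    rw [(ha₀c.comm b₀).eq, (ha₀c.comm b₁).eq, (hb₀c.comm a₁).eq]
    abel
  rw [hab]
  exact (Subring.center _).sub_mem (mem_center_of_mem_even (odd_mul_odd_mem_even ha₁ hb₁))
    (mem_center_of_mem_even (odd_mul_odd_mem_even hb₁ ha₁))

theorem ι_mul_ι_sub_ι_mul_ι (u v : M) :
    ι R u * ι R v - ι R v * ι R u = (2 : R) • (ι R u * ι R v) := by
  rw [two_smul, sub_eq_add_neg, neg_eq_of_add_eq_zero_left (ι_add_mul_swap u v)]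

theorem ι_mul_ι_ne_zero [Nontrivial R] {u v : M} {f g : Module.Dual R M}
    (hfu : f u = 1) (hfv : f v = 0) (hgu : g u = 0) (hgv : g v = 1) :
    ι R u * ι R v ≠ 0 := by
  intro h
  have hw : exteriorPower.ιMulti R 2 ![u, v] = 0 := by
    ext
    simpa [ιMulti_apply, List.ofFn_succ] using h
  have := exteriorPower.pairingDual_ιMulti_ιMulti ![f, g] ![u, v]
  simp [hw, Matrix.det_fin_two, hfu, hfv, hgu, hgv] at this

end ExteriorAlgebra

open ExteriorAlgebra in
/-- for `(E ⊕ E^op, exc)`, the commutator of any two symmetric elements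
is central, and some such commutator is nonzero. -/
theorem stmt_2 (F : Type*) [Field F] [CharZero F] :
    (∀ u v : GrassmannAlg F × (GrassmannAlg F)ᵐᵒᵖ, excInv u = u → excInv v = v →
      u * v - v * u ∈ Set.center (GrassmannAlg F × (GrassmannAlg F)ᵐᵒᵖ)) ∧
    ∃ u v : GrassmannAlg F × (GrassmannAlg F)ᵐᵒᵖ, excInv u = u ∧ excInv v = v ∧
      u * v - v * u ≠ 0 := by
  refine ⟨fun u v _ _ => ?_, ?_⟩
  · rw [Set.center_prod]
    refine ⟨mul_sub_mul_mem_center u.1 v.1, ?_⟩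
    rw [← unop_mem_center_iff]
    simpa using mul_sub_mul_mem_center (unop v.2) (unop u.2)
  · let e₀ := ι F (Finsupp.single 0 (1 : F))
    let e₁ := ι F (Finsupp.single 1 (1 : F))
    refine ⟨(e₀, op e₀), (e₁, op e₁), rfl, rfl, fun h => ?_⟩
    have he : e₀ * e₁ ≠ 0 :=
      ι_mul_ι_ne_zero (f := Finsupp.lapply 0) (g := Finsupp.lapply 1) (by simp) (by simp)
        (by simp) (by simp)
    exact smul_ne_zero two_ne_zero he <| (ι_mul_ι_sub_ι_mul_ι _ _).symm.trans congr(Prod.fst $h)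
end

section
/- The polynomial [x_1^-, x_2^-, x_3^-] (the left-normed triple commutator of three skew variables) is a *-polynomial identity of E ⊕ E^op with the exchange involution: for all skew elements u, v, w (i.e., u^* = -u, etc.), [[u,v],w] = 0. -/
open MulOpposite

section Aux

variable {F : Type*} [Field F] [CharZero F] {M : Type*} [AddCommGroup M] [Module F M]

open CliffordAlgebra

/-- A generator super-commutes: `ι m * x = involute x * ι m`. -/
lemma grass_ι_mul (m : M) (x : ExteriorAlgebra F M) :
    ExteriorAlgebra.ι F m * x = involute x * ExteriorAlgebra.ι F m := by
  induction x using CliffordAlgebra.induction with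
  | algebraMap r => rw [AlgHom.commutes]; exact (Algebra.commutes r _).symm
  | ι n =>
      rw [involute_ι, neg_mul]
      exact eq_neg_of_add_eq_zero_left (ExteriorAlgebra.ι_add_mul_swap m n)
  | mul x y hx hy => rw [map_mul, ← mul_assoc, hx, mul_assoc, hy, mul_assoc]
  | add x y hx hy => rw [map_add, mul_add, add_mul, hx, hy]

/-- Elements fixed by the grade involution are central. -/
lemma grass_central_of_involute_fixed (x : ExteriorAlgebra F M)
    (hx : involute x = x) (z : ExteriorAlgebra F M) : x * z = z * x := by
  induction z using CliffordAlgebra.induction with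
  | algebraMap r => exact (Algebra.commutes r x).symm
  | ι n => rw [grass_ι_mul n x, hx]
  | mul a b ha hb => rw [← mul_assoc, ha, mul_assoc, hb, mul_assoc]
  | add a b ha hb => rw [mul_add, add_mul, ha, hb]

/-- Commutators are central in the exterior algebra (char 0). -/
lemma grass_comm_central (a b z : ExteriorAlgebra F M) :
    (a * b - b * a) * z = z * (a * b - b * a) := by
  set a0 : ExteriorAlgebra F M := ((2 : F)⁻¹) • (a + involute a) with ha0
  set a1 : ExteriorAlgebra F M := ((2 : F)⁻¹) • (a - involute a) with ha1
  set b0 : ExteriorAlgebra F M := ((2 : F)⁻¹) • (b + involute b) with hb0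
  set b1 : ExteriorAlgebra F M := ((2 : F)⁻¹) • (b - involute b) with hb1
  have h2 : ((2 : F)⁻¹) * 2 = 1 := inv_mul_cancel₀ two_ne_zero
  have ea : a = a0 + a1 := by
    rw [ha0, ha1, ← smul_add]
    rw [show a + involute a + (a - involute a) = (2 : F) • a by
      rw [two_smul]; abel]
    rw [smul_smul, h2, one_smul]
  have eb : b = b0 + b1 := by
    rw [hb0, hb1, ← smul_add]
    rw [show b + involute b + (b - involute b) = (2 : F) • b by
      rw [two_smul]; abel]
    rw [smul_smul, h2, one_smul]
  have hia0 : involute a0 = a0 := by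
    rw [ha0, map_smul, map_add, involute_involute]; rw [add_comm]
  have hib0 : involute b0 = b0 := by
    rw [hb0, map_smul, map_add, involute_involute]; rw [add_comm]
  have hia1 : involute a1 = -a1 := by
    rw [ha1, map_smul, map_sub, involute_involute, ← smul_neg, neg_sub]
  have hib1 : involute b1 = -b1 := by
    rw [hb1, map_smul, map_sub, involute_involute, ← smul_neg, neg_sub]
  have ca0 := grass_central_of_involute_fixed a0 hia0
  have cb0 := grass_central_of_involute_fixed b0 hib0
  have hred : a * b - b * a = a1 * b1 - b1 * a1 := by
    rw [ea, eb]
    rw [add_mul, add_mul, mul_add, mul_add, mul_add, mul_add]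
    rw [ca0 b0, ca0 b1, ← cb0 a1]
    abel
  rw [hred]
  apply grass_central_of_involute_fixed
  rw [map_sub, map_mul, map_mul, hia1, hib1, neg_mul_neg, neg_mul_neg]

lemma grass_triple (a b c : ExteriorAlgebra F M) :
    (a * b - b * a) * c - c * (a * b - b * a) = 0 := by
  rw [grass_comm_central, sub_self]

end Aux

/-- `[x₁⁻, x₂⁻, x₃⁻]` is a `*`-polynomial identity of `(E ⊕ E^op, exc)`. -/
theorem stmt_3 (F : Type*) [Field F] [CharZero F] :
    ∀ u v w : GrassmannAlg F × (GrassmannAlg F)ᵐᵒᵖ,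
      excInv u = -u → excInv v = -v → excInv w = -w →
      (u * v - v * u) * w - w * (u * v - v * u) = 0 := by
  intro u v w _ _ _
  refine Prod.ext ?_ ?_
  · simp only [Prod.fst_mul, Prod.fst_sub, Prod.fst_zero]
    exact grass_triple u.1 v.1 w.1
  · simp only [Prod.snd_mul, Prod.snd_sub, Prod.snd_zero]
    apply unop_injective
    simp only [unop_mul, unop_sub, unop_zero]
    rw [show ∀ A B C : GrassmannAlg F,
        C * (B * A - A * B) - (B * A - A * B) * C = 0 from fun A B C => by
      rw [grass_comm_central B A C, sub_self]]
end

section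
/- The polynomial [x_1^-, x_2^-][x_3^-, x_4^-] is a *-polynomial identity of (M_{1,1}(E), ◇) but not of (M_2(F), s): for all 2×2 matrices A, B, C, D over the Grassmann algebra E with even diagonal entries and odd off-diagonal entries which are skew under ◇, [A,B][C,D] = 0, while there exist skew elements of (M_2(F), s) for which the corresponding product of commutators is nonzero. -/
open Matrix

/-- The even part `E⁽⁰⁾` of the Grassmann algebra. -/
noncomputable def evenPart (F : Type*) [Field F] : Submodule F (GrassmannAlg F) :=
  CliffordAlgebra.evenOdd (0 : QuadraticForm F (ℕ →₀ F)) 0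

/-- The odd part `E⁽¹⁾` of the Grassmann algebra. -/
noncomputable def oddPart (F : Type*) [Field F] : Submodule F (GrassmannAlg F) :=
  CliffordAlgebra.evenOdd (0 : QuadraticForm F (ℕ →₀ F)) 1

/-- Membership in `M_{1,1}(E)`: even diagonal entries, odd off-diagonal entries. -/
def memM11 {F : Type*} [Field F] (A : Matrix (Fin 2) (Fin 2) (GrassmannAlg F)) : Prop :=
  A 0 0 ∈ evenPart F ∧ A 1 1 ∈ evenPart F ∧ A 0 1 ∈ oddPart F ∧ A 1 0 ∈ oddPart F

/-- The involution `◇` on `M_{1,1}(E)`: `(a b; c d)^◇ = (d b; -c a)`. -/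
noncomputable def diaInv {F : Type*} [Field F] (A : Matrix (Fin 2) (Fin 2) (GrassmannAlg F)) :
    Matrix (Fin 2) (Fin 2) (GrassmannAlg F) :=
  !![A 1 1, A 0 1; -(A 1 0), A 0 0]

/-- The symplectic involution on `M_2(F)`. -/
def sympInv {F : Type*} [Field F] (A : Matrix (Fin 2) (Fin 2) F) :
    Matrix (Fin 2) (Fin 2) F :=
  !![A 1 1, -A 0 1; -A 1 0, A 0 0]

noncomputable def gi (F : Type*) [Field F] : (ℕ →₀ F) →ₗ[F] GrassmannAlg F :=
  CliffordAlgebra.ι (0 : QuadraticForm F (ℕ →₀ F))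

lemma gi_swap (F : Type*) [Field F] (a b : ℕ →₀ F) :
    gi F a * gi F b = -(gi F b * gi F a) := by
  have h := CliffordAlgebra.ι_mul_ι_add_swap (Q := (0 : QuadraticForm F (ℕ →₀ F))) a b
  simp only [QuadraticMap.polar, QuadraticMap.zero_apply, sub_zero, zero_sub, neg_zero,
    map_zero] at h
  exact eq_neg_of_add_eq_zero_left h

lemma gii_central (F : Type*) [Field F] (m n : ℕ →₀ F) :
    gi F m * gi F n ∈ Subalgebra.center F (GrassmannAlg F) := by
  rw [Subalgebra.mem_center_iff]
  intro x
  induction x using CliffordAlgebra.induction with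
  | algebraMap r => exact Algebra.commutes r _
  | ι v =>
      show gi F v * (gi F m * gi F n) = gi F m * gi F n * gi F v
      rw [← mul_assoc, gi_swap F v m, neg_mul, mul_assoc, gi_swap F v n, mul_neg, neg_neg,
        ← mul_assoc]
  | mul a b ha hb =>
      show a * b * _ = _ * (a * b)
      rw [mul_assoc, hb, ← mul_assoc, ha, mul_assoc]
  | add a b ha hb =>
      show (a + b) * _ = _ * (a + b)
      rw [add_mul, mul_add, ha, hb]

lemma even_central {F : Type*} [Field F] {a : GrassmannAlg F} (h : a ∈ evenPart F) :
    ∀ b : GrassmannAlg F, a * b = b * a := by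
  induction a, h using CliffordAlgebra.even_induction with
  | algebraMap r => exact fun b => Algebra.commutes r b
  | add x y hx hy ihx ihy => intro b; rw [add_mul, mul_add, ihx, ihy]
  | ι_mul_ι_mul m₁ m₂ x hx ihx =>
      intro b
      have hc := Subalgebra.mem_center_iff.mp (gii_central F m₁ m₂) b
      show gi F m₁ * gi F m₂ * x * b = b * (gi F m₁ * gi F m₂ * x)
      rw [mul_assoc, ihx, ← mul_assoc, ← hc, mul_assoc]

lemma skew_off_diag_zero {F : Type*} [Field F] [CharZero F]
    {A : Matrix (Fin 2) (Fin 2) (GrassmannAlg F)} (h : diaInv A = -A) : A 0 1 = 0 := by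
  have h01 : A 0 1 = -(A 0 1) := by
    have := congrFun (congrFun h 0) 1
    simpa [diaInv] using this
  have h2 : (2 : F) • A 0 1 = 0 := by
    rw [two_smul]
    exact add_eq_zero_iff_eq_neg.mpr h01
  rcases smul_eq_zero.mp h2 with h | h
  · exact absurd h two_ne_zero
  · exact h

/-- `[x₁⁻, x₂⁻][x₃⁻, x₄⁻]` is a `*`-polynomial identity of
`(M_{1,1}(E), ◇)` but not of `(M_2(F), s)`. -/
theorem stmt_6 (F : Type*) [Field F] [CharZero F] :
    (∀ A B C D : Matrix (Fin 2) (Fin 2) (GrassmannAlg F),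
      memM11 A → memM11 B → memM11 C → memM11 D →
      diaInv A = -A → diaInv B = -B → diaInv C = -C → diaInv D = -D →
      (A * B - B * A) * (C * D - D * C) = 0) ∧
    ∃ A B C D : Matrix (Fin 2) (Fin 2) F,
      sympInv A = -A ∧ sympInv B = -B ∧ sympInv C = -C ∧ sympInv D = -D ∧
      (A * B - B * A) * (C * D - D * C) ≠ 0 := by
  constructor
  · intro A B C D hA hB hC hD sA sB sC sD
    -- key: for skew elements of M₁,₁(E), the commutator has only the (1,0) entry nonzero
    have key : ∀ X Y : Matrix (Fin 2) (Fin 2) (GrassmannAlg F), memM11 X → memM11 Y →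
        diaInv X = -X → diaInv Y = -Y →
        (X * Y - Y * X) 0 0 = 0 ∧ (X * Y - Y * X) 0 1 = 0 ∧ (X * Y - Y * X) 1 1 = 0 := by
      intro X Y hX hY sX sY
      have eX := skew_off_diag_zero sX
      have eY := skew_off_diag_zero sY
      refine ⟨?_, ?_, ?_⟩
      · simp [Matrix.mul_apply, Fin.sum_univ_two, eX, eY, even_central hX.1 (Y 0 0)]
      · simp [Matrix.mul_apply, Fin.sum_univ_two, eX, eY]
      · simp [Matrix.mul_apply, Fin.sum_univ_two, eX, eY, even_central hX.2.1 (Y 1 1)]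
    obtain ⟨k00, k01, k11⟩ := key A B hA hB sA sB
    obtain ⟨l00, l01, l11⟩ := key C D hC hD sC sD
    ext i j
    rw [Matrix.mul_apply, Fin.sum_univ_two]
    fin_cases i <;> fin_cases j <;>
      simp [k00, k01, k11, l00, l01, l11]
  · refine ⟨!![0, 1; 0, 0], !![0, 0; 1, 0], !![0, 1; 0, 0], !![0, 0; 1, 0], ?_, ?_, ?_, ?_, ?_⟩
    · ext i j; fin_cases i <;> fin_cases j <;> simp [sympInv]
    · ext i j; fin_cases i <;> fin_cases j <;> simp [sympInv]
    · ext i j; fin_cases i <;> fin_cases j <;> simp [sympInv]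
    · ext i j; fin_cases i <;> fin_cases j <;> simp [sympInv]
    · intro h
      have h00 := congrFun (congrFun h 0) 0
      simp [Matrix.mul_apply, Fin.sum_univ_two] at h00
end

section
/- Let N be the subalgebra of UT_6(F) consisting of matrices of the form with diagonal (a,b,c,c,b,a), nonzero entries only in positions (1,2),(1,3),(1,4),(1,5),(1,6),(2,3),(2,6),(3,6),(4,5),(4,6),(5,6). Then N is closed under the reflection involution θ_6, and its center is Z(N) = F·1 + F·e_{16}, i.e., an element of N is central if and only if it is of the form α·I + β·e_{16}. -/
/-!
The conditions defining `N` are symmetric under `(i, j) ↦ (7 - j, 7 - i)`, so `θ_6` preserves `N`.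
The matrix units `e₁₂, e₂₃, e₄₅, e₅₆, e₁₄, e₃₆` lie in `N`, and a matrix commuting with `e_{ij}`
has `M_{ii} = M_{jj}` and vanishing row `j` and column `i` off the diagonal; together with the
shape of `N` this leaves only `α • 1 + β • e₁₆`. Conversely, `e₁₆` commutes with every upper
triangular matrix whose two corner diagonal entries agree.
-/

open Matrix

/-- The reflection involution `θ_6` on `M_6(F)`. -/
def reflInv {F : Type*} [Field F] (A : Matrix (Fin 6) (Fin 6) F) :
    Matrix (Fin 6) (Fin 6) F :=
  Matrix.of fun i j => A j.rev i.rev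

/-- Membership in the algebra `N ⊆ UT_6(F)`: upper triangular, diagonal
`(a,b,c,c,b,a)` and entries `(2,4),(2,5),(3,4),(3,5)` (1-indexed) equal to zero. -/
def memN {F : Type*} [Field F] (M : Matrix (Fin 6) (Fin 6) F) : Prop :=
  (∀ i j : Fin 6, j < i → M i j = 0) ∧
  M 0 0 = M 5 5 ∧ M 1 1 = M 4 4 ∧ M 2 2 = M 3 3 ∧
  M 1 3 = 0 ∧ M 1 4 = 0 ∧ M 2 3 = 0 ∧ M 2 4 = 0

lemma memN_reflInv {F : Type*} [Field F] {M : Matrix (Fin 6) (Fin 6) F} (hM : memN M) :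
    memN (reflInv M) := by
  obtain ⟨hlow, hd0, hd1, hd2, h13, h14, h23, h24⟩ := hM
  exact ⟨fun i j hij => hlow _ _ (Fin.rev_lt_rev.mpr hij), hd0.symm, hd1.symm, hd2.symm,
    h24, h14, h23, h13⟩

lemma memN_single {F : Type*} [Field F] {i j : Fin 6} (hij : i < j)
    (hN : (i, j) ∉ ({(1, 3), (1, 4), (2, 3), (2, 4)} : Finset (Fin 6 × Fin 6))) (c : F) :
    memN (single i j c) := by
  simp only [Finset.mem_insert, Finset.mem_singleton, Prod.mk.injEq, not_or, not_and] at hN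
  refine ⟨fun k l hlk => ?_, ?_, ?_, ?_, ?_, ?_, ?_, ?_⟩ <;> simp only [single_apply] <;> grind

theorem commute_single_of_row_col {n R : Type*} [Fintype n] [DecidableEq n] [Semiring R]
    {i j : n} {X : Matrix n n R} (hrow : ∀ k, k ≠ j → X j k = 0)
    (hcol : ∀ k, k ≠ i → X k i = 0) (hdiag : X i i = X j j) :
    Commute (single i j 1) X := by
  ext a b
  by_cases ha : a = i <;> by_cases hb : b = j <;> simp [ha, hb, hrow, hcol, hdiag]

theorem eq_smul_one_add_smul_single {n R : Type*} [DecidableEq n] [Semiring R]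
    {M : Matrix n n R} {p q : n} (hpq : p ≠ q) (hdiag : ∀ i, M i i = M p p)
    (hoff : ∀ i j, i ≠ j → (i, j) ≠ (p, q) → M i j = 0) :
    M = M p p • (1 : Matrix n n R) + M p q • single p q 1 := by
  ext i j
  simp only [Matrix.add_apply, Matrix.smul_apply, Matrix.one_apply, single_apply, smul_eq_mul]
  grind

lemma commute_single_zero_five {F : Type*} [Field F] {X : Matrix (Fin 6) (Fin 6) F}
    (hX : memN X) : Commute (single 0 5 1) X :=
  commute_single_of_row_col (fun k hk => hX.1 5 k (by omega))
    (fun k hk => hX.1 k 0 (by omega)) hX.2.1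

lemma eq_smul_one_add_smul_single_of_commute {F : Type*} [Field F]
    {M : Matrix (Fin 6) (Fin 6) F} (hM : memN M)
    (hcomm : ∀ X : Matrix (Fin 6) (Fin 6) F, memN X → Commute M X) :
    M = M 0 0 • (1 : Matrix (Fin 6) (Fin 6) F) + M 0 5 • single 0 5 1 := by
  have commute_unit {i j : Fin 6} (hij : i < j)
      (hN : (i, j) ∉ ({(1, 3), (1, 4), (2, 3), (2, 4)} : Finset (Fin 6 × Fin 6))) :
      Commute (single i j 1) M :=
    (hcomm _ (memN_single hij hN 1)).symm
  have c01 := commute_unit (i := 0) (j := 1) (by decide) (by decide)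
  have c12 := commute_unit (i := 1) (j := 2) (by decide) (by decide)
  have c34 := commute_unit (i := 3) (j := 4) (by decide) (by decide)
  have c45 := commute_unit (i := 4) (j := 5) (by decide) (by decide)
  have c03 := commute_unit (i := 0) (j := 3) (by decide) (by decide)
  have c25 := commute_unit (i := 2) (j := 5) (by decide) (by decide)
  obtain ⟨hlow, -, -, hd2, h13, h14, h23, h24⟩ := hM
  refine eq_smul_one_add_smul_single (by decide) (fun i => ?_) (fun i j hij hij' => ?_)
  · have d01 := diag_eq_of_commute_single c01
    have d12 := diag_eq_of_commute_single c12
    have d34 := diag_eq_of_commute_single c34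
    have d45 := diag_eq_of_commute_single c45
    fin_cases i <;> grind
  · have h01 := col_eq_zero_of_commute_single c12 (k := 0) (by decide)
    have h02 := col_eq_zero_of_commute_single c25 (k := 0) (by decide)
    have h03 := col_eq_zero_of_commute_single c34 (k := 0) (by decide)
    have h04 := col_eq_zero_of_commute_single c45 (k := 0) (by decide)
    have h12 := row_eq_zero_of_commute_single c01 (k := 2) (by decide)
    have h15 := row_eq_zero_of_commute_single c01 (k := 5) (by decide)
    have h25 := row_eq_zero_of_commute_single c12 (k := 5) (by decide)
    have h34 := col_eq_zero_of_commute_single c45 (k := 3) (by decide)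
    have h35 := row_eq_zero_of_commute_single c03 (k := 5) (by decide)
    have h45 := row_eq_zero_of_commute_single c34 (k := 5) (by decide)
    fin_cases i <;> fin_cases j <;>
      first | assumption | exact hlow _ _ (by decide) | exact absurd rfl hij | exact absurd rfl hij'

theorem stmt_9_general (F : Type*) [Field F] :
    (∀ M : Matrix (Fin 6) (Fin 6) F, memN M → memN (reflInv M)) ∧
    (∀ M : Matrix (Fin 6) (Fin 6) F, memN M →
      ((∀ X : Matrix (Fin 6) (Fin 6) F, memN X → M * X = X * M) ↔
        ∃ a b : F, M = a • (1 : Matrix (Fin 6) (Fin 6) F) +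
          b • Matrix.single 0 5 (1 : F))) := by
  refine ⟨fun M => memN_reflInv, fun M hM => ⟨fun hcomm => ?_, ?_⟩⟩
  · exact ⟨_, _, eq_smul_one_add_smul_single_of_commute hM hcomm⟩
  · rintro ⟨a, b, rfl⟩ X hX
    exact (((Commute.one_left X).smul_left a).add_left
      ((commute_single_zero_five hX).smul_left b))

/-- `N` is closed under `θ_6`, and its center is `F·1 + F·e_{16}`. -/
theorem stmt_9 (F : Type*) [Field F] [CharZero F] :
    (∀ M : Matrix (Fin 6) (Fin 6) F, memN M → memN (reflInv M)) ∧
    (∀ M : Matrix (Fin 6) (Fin 6) F, memN M →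
      ((∀ X : Matrix (Fin 6) (Fin 6) F, memN X → M * X = X * M) ↔
        ∃ a b : F, M = a • (1 : Matrix (Fin 6) (Fin 6) F) +
          b • Matrix.single 0 5 (1 : F))) :=
  stmt_9_general F
end

section
/- The polynomial x_1^- x_2^- x_3^- x_4^- x_5^- is a *-polynomial identity of (N, θ_6): the product of any five skew-symmetric elements of N (with respect to the reflection involution) is zero. -/
open Matrix

def bad1 : List (ℕ × ℕ) := [(0, 0), (0, 5), (1, 0), (1, 1), (1, 3), (1, 4), (2, 0), (2, 1), (2, 2), (2, 3), (2, 4), (3, 0), (3, 1), (3, 2), (3, 3), (4, 0), (4, 1), (4, 2), (4, 3), (4, 4), (5, 0), (5, 1), (5, 2), (5, 3), (5, 4), (5, 5)]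
def bad2 : List (ℕ × ℕ) := [(0, 0), (0, 1), (0, 3), (1, 0), (1, 1), (1, 2), (1, 3), (1, 4), (2, 0), (2, 1), (2, 2), (2, 3), (2, 4), (2, 5), (3, 0), (3, 1), (3, 2), (3, 3), (3, 4), (4, 0), (4, 1), (4, 2), (4, 3), (4, 4), (4, 5), (5, 0), (5, 1), (5, 2), (5, 3), (5, 4), (5, 5)]
def bad3 : List (ℕ × ℕ) := [(0, 0), (0, 1), (0, 2), (0, 3), (0, 4), (1, 0), (1, 1), (1, 2), (1, 3), (1, 4), (1, 5), (2, 0), (2, 1), (2, 2), (2, 3), (2, 4), (2, 5), (3, 0), (3, 1), (3, 2), (3, 3), (3, 4), (3, 5), (4, 0), (4, 1), (4, 2), (4, 3), (4, 4), (4, 5), (5, 0), (5, 1), (5, 2), (5, 3), (5, 4), (5, 5)]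

def good1 {F : Type*} [Field F] (A : Matrix (Fin 6) (Fin 6) F) : Prop :=
  ∀ i j : Fin 6, (i.1, j.1) ∈ bad1 → A i j = 0
def good2 {F : Type*} [Field F] (A : Matrix (Fin 6) (Fin 6) F) : Prop :=
  ∀ i j : Fin 6, (i.1, j.1) ∈ bad2 → A i j = 0
def good3 {F : Type*} [Field F] (A : Matrix (Fin 6) (Fin 6) F) : Prop :=
  ∀ i j : Fin 6, (i.1, j.1) ∈ bad3 → A i j = 0

lemma skew_good1 {F : Type*} [Field F] [CharZero F] {A : Matrix (Fin 6) (Fin 6) F}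
    (hN : memN A) (hs : reflInv A = -A) : good1 A := by
  obtain ⟨hlt, e05, e14, e23, z13, z14, z23, z24⟩ := hN
  have hs' : ∀ i j : Fin 6, A j.rev i.rev = -A i j := by
    intro i j
    have := congrFun (congrFun hs i) j
    simpa [reflInv] using this
  have half : ∀ a : F, a = -a → a = 0 := by
    intro a h
    have h2 : (2 : F) * a = 0 := by linear_combination h
    exact (mul_eq_zero.mp h2).resolve_left two_ne_zero
  have h00 := hs' 0 0
  rw [show ((0 : Fin 6).rev) = 5 from by decide] at h00
  have h11 := hs' 1 1
  rw [show ((1 : Fin 6).rev) = 4 from by decide] at h11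
  have h22 := hs' 2 2
  rw [show ((2 : Fin 6).rev) = 3 from by decide] at h22
  have h05 := hs' 0 5
  rw [show ((0 : Fin 6).rev) = 5 from by decide,
      show ((5 : Fin 6).rev) = 0 from by decide] at h05
  have d0 : A 0 0 = 0 := half _ (e05.trans h00)
  have d5 : A 5 5 = 0 := e05 ▸ d0
  have d1 : A 1 1 = 0 := half _ (e14.trans h11)
  have d4 : A 4 4 = 0 := e14 ▸ d1
  have d2 : A 2 2 = 0 := half _ (e23.trans h22)
  have d3 : A 3 3 = 0 := e23 ▸ d2
  have w05 : A 0 5 = 0 := half _ h05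
  intro i j hmem
  fin_cases i <;> fin_cases j <;>
    first
      | exact absurd hmem (by decide)
      | assumption
      | exact hlt _ _ (by decide)

lemma step12 {F : Type*} [Field F] {A B : Matrix (Fin 6) (Fin 6) F}
    (hA : good1 A) (hB : good1 B) : good2 (A * B) := by
  have A00 : A 0 0 = 0 := hA 0 0 (by decide)
  have A05 : A 0 5 = 0 := hA 0 5 (by decide)
  have A10 : A 1 0 = 0 := hA 1 0 (by decide)
  have A11 : A 1 1 = 0 := hA 1 1 (by decide)
  have A13 : A 1 3 = 0 := hA 1 3 (by decide)
  have A14 : A 1 4 = 0 := hA 1 4 (by decide)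
  have A20 : A 2 0 = 0 := hA 2 0 (by decide)
  have A21 : A 2 1 = 0 := hA 2 1 (by decide)
  have A22 : A 2 2 = 0 := hA 2 2 (by decide)
  have A23 : A 2 3 = 0 := hA 2 3 (by decide)
  have A24 : A 2 4 = 0 := hA 2 4 (by decide)
  have A30 : A 3 0 = 0 := hA 3 0 (by decide)
  have A31 : A 3 1 = 0 := hA 3 1 (by decide)
  have A32 : A 3 2 = 0 := hA 3 2 (by decide)
  have A33 : A 3 3 = 0 := hA 3 3 (by decide)
  have A40 : A 4 0 = 0 := hA 4 0 (by decide)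
  have A41 : A 4 1 = 0 := hA 4 1 (by decide)
  have A42 : A 4 2 = 0 := hA 4 2 (by decide)
  have A43 : A 4 3 = 0 := hA 4 3 (by decide)
  have A44 : A 4 4 = 0 := hA 4 4 (by decide)
  have A50 : A 5 0 = 0 := hA 5 0 (by decide)
  have A51 : A 5 1 = 0 := hA 5 1 (by decide)
  have A52 : A 5 2 = 0 := hA 5 2 (by decide)
  have A53 : A 5 3 = 0 := hA 5 3 (by decide)
  have A54 : A 5 4 = 0 := hA 5 4 (by decide)
  have A55 : A 5 5 = 0 := hA 5 5 (by decide)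
  have B00 : B 0 0 = 0 := hB 0 0 (by decide)
  have B05 : B 0 5 = 0 := hB 0 5 (by decide)
  have B10 : B 1 0 = 0 := hB 1 0 (by decide)
  have B11 : B 1 1 = 0 := hB 1 1 (by decide)
  have B13 : B 1 3 = 0 := hB 1 3 (by decide)
  have B14 : B 1 4 = 0 := hB 1 4 (by decide)
  have B20 : B 2 0 = 0 := hB 2 0 (by decide)
  have B21 : B 2 1 = 0 := hB 2 1 (by decide)
  have B22 : B 2 2 = 0 := hB 2 2 (by decide)
  have B23 : B 2 3 = 0 := hB 2 3 (by decide)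
  have B24 : B 2 4 = 0 := hB 2 4 (by decide)
  have B30 : B 3 0 = 0 := hB 3 0 (by decide)
  have B31 : B 3 1 = 0 := hB 3 1 (by decide)
  have B32 : B 3 2 = 0 := hB 3 2 (by decide)
  have B33 : B 3 3 = 0 := hB 3 3 (by decide)
  have B40 : B 4 0 = 0 := hB 4 0 (by decide)
  have B41 : B 4 1 = 0 := hB 4 1 (by decide)
  have B42 : B 4 2 = 0 := hB 4 2 (by decide)
  have B43 : B 4 3 = 0 := hB 4 3 (by decide)
  have B44 : B 4 4 = 0 := hB 4 4 (by decide)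
  have B50 : B 5 0 = 0 := hB 5 0 (by decide)
  have B51 : B 5 1 = 0 := hB 5 1 (by decide)
  have B52 : B 5 2 = 0 := hB 5 2 (by decide)
  have B53 : B 5 3 = 0 := hB 5 3 (by decide)
  have B54 : B 5 4 = 0 := hB 5 4 (by decide)
  have B55 : B 5 5 = 0 := hB 5 5 (by decide)
  intro i j hmem
  rw [Matrix.mul_apply, Fin.sum_univ_six]
  fin_cases i <;> fin_cases j <;>
    first
      | exact absurd hmem (by decide)
      | simp [A00, A05, A10, A11, A13, A14, A20, A21, A22, A23, A24, A30, A31, A32, A33, A40, A41, A42, A43, A44, A50, A51, A52, A53, A54, A55, B00, B05, B10, B11, B13, B14, B20, B21, B22, B23, B24, B30, B31, B32, B33, B40, B41, B42, B43, B44, B50, B51, B52, B53, B54, B55]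

lemma step3 {F : Type*} [Field F] {A B : Matrix (Fin 6) (Fin 6) F}
    (hA : good2 A) (hB : good1 B) : good3 (A * B) := by
  have A00 : A 0 0 = 0 := hA 0 0 (by decide)
  have A01 : A 0 1 = 0 := hA 0 1 (by decide)
  have A03 : A 0 3 = 0 := hA 0 3 (by decide)
  have A10 : A 1 0 = 0 := hA 1 0 (by decide)
  have A11 : A 1 1 = 0 := hA 1 1 (by decide)
  have A12 : A 1 2 = 0 := hA 1 2 (by decide)
  have A13 : A 1 3 = 0 := hA 1 3 (by decide)
  have A14 : A 1 4 = 0 := hA 1 4 (by decide)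
  have A20 : A 2 0 = 0 := hA 2 0 (by decide)
  have A21 : A 2 1 = 0 := hA 2 1 (by decide)
  have A22 : A 2 2 = 0 := hA 2 2 (by decide)
  have A23 : A 2 3 = 0 := hA 2 3 (by decide)
  have A24 : A 2 4 = 0 := hA 2 4 (by decide)
  have A25 : A 2 5 = 0 := hA 2 5 (by decide)
  have A30 : A 3 0 = 0 := hA 3 0 (by decide)
  have A31 : A 3 1 = 0 := hA 3 1 (by decide)
  have A32 : A 3 2 = 0 := hA 3 2 (by decide)
  have A33 : A 3 3 = 0 := hA 3 3 (by decide)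
  have A34 : A 3 4 = 0 := hA 3 4 (by decide)
  have A40 : A 4 0 = 0 := hA 4 0 (by decide)
  have A41 : A 4 1 = 0 := hA 4 1 (by decide)
  have A42 : A 4 2 = 0 := hA 4 2 (by decide)
  have A43 : A 4 3 = 0 := hA 4 3 (by decide)
  have A44 : A 4 4 = 0 := hA 4 4 (by decide)
  have A45 : A 4 5 = 0 := hA 4 5 (by decide)
  have A50 : A 5 0 = 0 := hA 5 0 (by decide)
  have A51 : A 5 1 = 0 := hA 5 1 (by decide)
  have A52 : A 5 2 = 0 := hA 5 2 (by decide)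
  have A53 : A 5 3 = 0 := hA 5 3 (by decide)
  have A54 : A 5 4 = 0 := hA 5 4 (by decide)
  have A55 : A 5 5 = 0 := hA 5 5 (by decide)
  have B00 : B 0 0 = 0 := hB 0 0 (by decide)
  have B05 : B 0 5 = 0 := hB 0 5 (by decide)
  have B10 : B 1 0 = 0 := hB 1 0 (by decide)
  have B11 : B 1 1 = 0 := hB 1 1 (by decide)
  have B13 : B 1 3 = 0 := hB 1 3 (by decide)
  have B14 : B 1 4 = 0 := hB 1 4 (by decide)
  have B20 : B 2 0 = 0 := hB 2 0 (by decide)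
  have B21 : B 2 1 = 0 := hB 2 1 (by decide)
  have B22 : B 2 2 = 0 := hB 2 2 (by decide)
  have B23 : B 2 3 = 0 := hB 2 3 (by decide)
  have B24 : B 2 4 = 0 := hB 2 4 (by decide)
  have B30 : B 3 0 = 0 := hB 3 0 (by decide)
  have B31 : B 3 1 = 0 := hB 3 1 (by decide)
  have B32 : B 3 2 = 0 := hB 3 2 (by decide)
  have B33 : B 3 3 = 0 := hB 3 3 (by decide)
  have B40 : B 4 0 = 0 := hB 4 0 (by decide)
  have B41 : B 4 1 = 0 := hB 4 1 (by decide)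
  have B42 : B 4 2 = 0 := hB 4 2 (by decide)
  have B43 : B 4 3 = 0 := hB 4 3 (by decide)
  have B44 : B 4 4 = 0 := hB 4 4 (by decide)
  have B50 : B 5 0 = 0 := hB 5 0 (by decide)
  have B51 : B 5 1 = 0 := hB 5 1 (by decide)
  have B52 : B 5 2 = 0 := hB 5 2 (by decide)
  have B53 : B 5 3 = 0 := hB 5 3 (by decide)
  have B54 : B 5 4 = 0 := hB 5 4 (by decide)
  have B55 : B 5 5 = 0 := hB 5 5 (by decide)
  intro i j hmem
  rw [Matrix.mul_apply, Fin.sum_univ_six]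
  fin_cases i <;> fin_cases j <;>
    first
      | exact absurd hmem (by decide)
      | simp [A00, A01, A03, A10, A11, A12, A13, A14, A20, A21, A22, A23, A24, A25, A30, A31, A32, A33, A34, A40, A41, A42, A43, A44, A45, A50, A51, A52, A53, A54, A55, B00, B05, B10, B11, B13, B14, B20, B21, B22, B23, B24, B30, B31, B32, B33, B40, B41, B42, B43, B44, B50, B51, B52, B53, B54, B55]

lemma step4 {F : Type*} [Field F] {A B : Matrix (Fin 6) (Fin 6) F}
    (hA : good3 A) (hB : good1 B) : A * B = 0 := by
  have A00 : A 0 0 = 0 := hA 0 0 (by decide)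
  have A01 : A 0 1 = 0 := hA 0 1 (by decide)
  have A02 : A 0 2 = 0 := hA 0 2 (by decide)
  have A03 : A 0 3 = 0 := hA 0 3 (by decide)
  have A04 : A 0 4 = 0 := hA 0 4 (by decide)
  have A10 : A 1 0 = 0 := hA 1 0 (by decide)
  have A11 : A 1 1 = 0 := hA 1 1 (by decide)
  have A12 : A 1 2 = 0 := hA 1 2 (by decide)
  have A13 : A 1 3 = 0 := hA 1 3 (by decide)
  have A14 : A 1 4 = 0 := hA 1 4 (by decide)
  have A15 : A 1 5 = 0 := hA 1 5 (by decide)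
  have A20 : A 2 0 = 0 := hA 2 0 (by decide)
  have A21 : A 2 1 = 0 := hA 2 1 (by decide)
  have A22 : A 2 2 = 0 := hA 2 2 (by decide)
  have A23 : A 2 3 = 0 := hA 2 3 (by decide)
  have A24 : A 2 4 = 0 := hA 2 4 (by decide)
  have A25 : A 2 5 = 0 := hA 2 5 (by decide)
  have A30 : A 3 0 = 0 := hA 3 0 (by decide)
  have A31 : A 3 1 = 0 := hA 3 1 (by decide)
  have A32 : A 3 2 = 0 := hA 3 2 (by decide)
  have A33 : A 3 3 = 0 := hA 3 3 (by decide)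
  have A34 : A 3 4 = 0 := hA 3 4 (by decide)
  have A35 : A 3 5 = 0 := hA 3 5 (by decide)
  have A40 : A 4 0 = 0 := hA 4 0 (by decide)
  have A41 : A 4 1 = 0 := hA 4 1 (by decide)
  have A42 : A 4 2 = 0 := hA 4 2 (by decide)
  have A43 : A 4 3 = 0 := hA 4 3 (by decide)
  have A44 : A 4 4 = 0 := hA 4 4 (by decide)
  have A45 : A 4 5 = 0 := hA 4 5 (by decide)
  have A50 : A 5 0 = 0 := hA 5 0 (by decide)
  have A51 : A 5 1 = 0 := hA 5 1 (by decide)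
  have A52 : A 5 2 = 0 := hA 5 2 (by decide)
  have A53 : A 5 3 = 0 := hA 5 3 (by decide)
  have A54 : A 5 4 = 0 := hA 5 4 (by decide)
  have A55 : A 5 5 = 0 := hA 5 5 (by decide)
  have B00 : B 0 0 = 0 := hB 0 0 (by decide)
  have B05 : B 0 5 = 0 := hB 0 5 (by decide)
  have B10 : B 1 0 = 0 := hB 1 0 (by decide)
  have B11 : B 1 1 = 0 := hB 1 1 (by decide)
  have B13 : B 1 3 = 0 := hB 1 3 (by decide)
  have B14 : B 1 4 = 0 := hB 1 4 (by decide)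
  have B20 : B 2 0 = 0 := hB 2 0 (by decide)
  have B21 : B 2 1 = 0 := hB 2 1 (by decide)
  have B22 : B 2 2 = 0 := hB 2 2 (by decide)
  have B23 : B 2 3 = 0 := hB 2 3 (by decide)
  have B24 : B 2 4 = 0 := hB 2 4 (by decide)
  have B30 : B 3 0 = 0 := hB 3 0 (by decide)
  have B31 : B 3 1 = 0 := hB 3 1 (by decide)
  have B32 : B 3 2 = 0 := hB 3 2 (by decide)
  have B33 : B 3 3 = 0 := hB 3 3 (by decide)
  have B40 : B 4 0 = 0 := hB 4 0 (by decide)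
  have B41 : B 4 1 = 0 := hB 4 1 (by decide)
  have B42 : B 4 2 = 0 := hB 4 2 (by decide)
  have B43 : B 4 3 = 0 := hB 4 3 (by decide)
  have B44 : B 4 4 = 0 := hB 4 4 (by decide)
  have B50 : B 5 0 = 0 := hB 5 0 (by decide)
  have B51 : B 5 1 = 0 := hB 5 1 (by decide)
  have B52 : B 5 2 = 0 := hB 5 2 (by decide)
  have B53 : B 5 3 = 0 := hB 5 3 (by decide)
  have B54 : B 5 4 = 0 := hB 5 4 (by decide)
  have B55 : B 5 5 = 0 := hB 5 5 (by decide)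
  ext i j
  rw [Matrix.mul_apply, Fin.sum_univ_six]
  fin_cases i <;> fin_cases j <;>
    simp [A00, A01, A02, A03, A04, A10, A11, A12, A13, A14, A15, A20, A21, A22, A23, A24, A25, A30, A31, A32, A33, A34, A35, A40, A41, A42, A43, A44, A45, A50, A51, A52, A53, A54, A55, B00, B05, B10, B11, B13, B14, B20, B21, B22, B23, B24, B30, B31, B32, B33, B40, B41, B42, B43, B44, B50, B51, B52, B53, B54, B55]

/-- `x₁⁻ x₂⁻ x₃⁻ x₄⁻ x₅⁻` is a `*`-polynomial identity of `(N, θ_6)`. -/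
theorem stmt_12 (F : Type*) [Field F] [CharZero F] :
    ∀ A₁ A₂ A₃ A₄ A₅ : Matrix (Fin 6) (Fin 6) F,
      memN A₁ → memN A₂ → memN A₃ → memN A₄ → memN A₅ →
      reflInv A₁ = -A₁ → reflInv A₂ = -A₂ → reflInv A₃ = -A₃ →
      reflInv A₄ = -A₄ → reflInv A₅ = -A₅ →
      A₁ * A₂ * A₃ * A₄ * A₅ = 0 := by
  intro A₁ A₂ A₃ A₄ A₅ h1 h2 h3 h4 h5 s1 s2 s3 s4 s5
  have g1 := skew_good1 h1 s1
  have g2 := skew_good1 h2 s2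
  have g3 := skew_good1 h3 s3
  have g4 := skew_good1 h4 s4
  have h1234 : A₁ * A₂ * A₃ * A₄ = 0 := step4 (step3 (step12 g1 g2) g3) g4
  rw [h1234, zero_mul]
end

section
/- The polynomial [x_1^-, x_2^-] ∘ x_3^- (Jordan product of a commutator of skew elements with a skew element) is a *-polynomial identity of (N, σ_6) but not of (N, θ_6): for all A, B, C ∈ N skew with respect to σ_6, [A,B]C + C[A,B] = 0, while there exist A, B, C ∈ N skew with respect to θ_6 with [A,B]C + C[A,B] ≠ 0. -/
/-!
The skewness relations cut a `σ₆`-skew element `X` of `N` down to the six free entries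
`x₁₂, x₁₃, x₁₄, x₁₅, x₁₆, x₂₃`, with `x₂₆ = x₁₅`, `x₃₆ = x₁₄`, `x₄₅ = -x₂₃`, `x₄₆ = -x₁₃`,
`x₅₆ = -x₁₂`. The only paths of length three from `1` to `6` through these positions are
`1 → 2 → 3 → 6` and `1 → 4 → 5 → 6`, so for skew `X, Y, Z` we get
`XYZ = (x₁₂ y₂₃ z₁₄ + x₁₄ y₂₃ z₁₂) e₁₆`, which is symmetric in `X` and `Z`. Hence `XYZ = ZYX` and
`[A,B] ∘ C = (ABC - CBA) - (BAC - CAB) = 0`.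

For `θ₆` the sign `δ` is missing: `A = e₁₂ - e₅₆`, `B = e₂₃ - e₄₅`, `C = e₁₄ - e₃₆` are `θ₆`-skew
and `[A,B] ∘ C = -2 e₁₆`. In the code indices are `0`-based, so `e₁₆` is `single 0 5 1`.
-/

open Matrix

/-- The sign `δ(i)` for `σ_6`: `1` for `i ∈ {1,2,3}` and `-1` for `i ∈ {4,5,6}`. -/
def deltaSign (F : Type*) [Field F] (i : Fin 6) : F :=
  if (i : ℕ) < 3 then 1 else -1

/-- The symplectic-type involution `σ_6` on `M_6(F)`:
`(A^{σ_6})_{ij} = δ(i)δ(j) A_{rev j, rev i}`. -/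
def sigmaInv {F : Type*} [Field F] (A : Matrix (Fin 6) (Fin 6) F) :
    Matrix (Fin 6) (Fin 6) F :=
  Matrix.of fun i j => deltaSign F i * deltaSign F j * A j.rev i.rev

section

variable {F : Type*} [Field F]

def sigmaSkew (a b c d e f : F) : Matrix (Fin 6) (Fin 6) F :=
  !![0, a, b, c, d, e;
     0, 0, f, 0, 0, d;
     0, 0, 0, 0, 0, c;
     0, 0, 0, 0, -f, -b;
     0, 0, 0, 0, 0, -a;
     0, 0, 0, 0, 0, 0]

lemma eq_sigmaSkew_of_memN_of_sigmaInv_eq_neg [CharZero F] {A : Matrix (Fin 6) (Fin 6) F}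
    (hN : memN A) (hσ : sigmaInv A = -A) :
    A = sigmaSkew (A 0 1) (A 0 2) (A 0 3) (A 0 4) (A 0 5) (A 1 2) := by
  obtain ⟨hlower, h00, h11, h22, h13, h14, h23, h24⟩ := hN
  have hentry : ∀ i j, -A i j = deltaSign F i * deltaSign F j * A j.rev i.rev := fun i j => by
    simpa [sigmaInv] using (congrFun (congrFun hσ i) j).symm
  ext i j
  have := hentry i j
  fin_cases i <;> fin_cases j <;>
    simp only [sigmaSkew, deltaSign, of_apply, cons_val', cons_val, cons_val_zero, cons_val_one,
      cons_val_fin_one, Fin.isValue, Fin.mk_one, Fin.zero_eta, Fin.reduceFinMk, Fin.reduceRev,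
      Fin.rev_zero, Fin.reduceLast, Nat.reduceLT, Nat.ofNat_pos, Nat.one_lt_ofNat, Nat.lt_add_one,
      lt_self_iff_false, ↓reduceIte] at this ⊢ <;>
    grind

lemma sigmaSkew_mul_sigmaSkew (a b c d e f a' b' c' d' e' f' : F) :
    sigmaSkew a b c d e f * sigmaSkew a' b' c' d' e' f' =
      !![0, 0, a * f', 0, -(c * f'), a * d' + b * c' - c * b' - d * a';
         0, 0, 0, 0, 0, f * c';
         0, 0, 0, 0, 0, 0;
         0, 0, 0, 0, 0, f * a';
         0, 0, 0, 0, 0, 0;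
         0, 0, 0, 0, 0, 0] := by
  ext i j
  fin_cases i <;> fin_cases j <;> simp [sigmaSkew, mul_apply, Fin.sum_univ_succ]
  ring

lemma sigmaSkew_mul_sigmaSkew_mul_sigmaSkew
    (a b c d e f a' b' c' d' e' f' a'' b'' c'' d'' e'' f'' : F) :
    sigmaSkew a b c d e f * sigmaSkew a' b' c' d' e' f' * sigmaSkew a'' b'' c'' d'' e'' f'' =
      single 0 5 (a * f' * c'' + c * f' * a'') := by
  rw [sigmaSkew_mul_sigmaSkew]
  ext i j
  fin_cases i <;> fin_cases j <;> simp [sigmaSkew, mul_apply, Fin.sum_univ_succ, single]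

lemma mul_mul_eq_mul_mul_rev_of_sigmaInv_eq_neg [CharZero F] {X Y Z : Matrix (Fin 6) (Fin 6) F}
    (hX : memN X) (hY : memN Y) (hZ : memN Z)
    (hX' : sigmaInv X = -X) (hY' : sigmaInv Y = -Y) (hZ' : sigmaInv Z = -Z) :
    X * Y * Z = Z * Y * X := by
  rw [eq_sigmaSkew_of_memN_of_sigmaInv_eq_neg hX hX',
    eq_sigmaSkew_of_memN_of_sigmaInv_eq_neg hY hY', eq_sigmaSkew_of_memN_of_sigmaInv_eq_neg hZ hZ',
    sigmaSkew_mul_sigmaSkew_mul_sigmaSkew, sigmaSkew_mul_sigmaSkew_mul_sigmaSkew]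
  congr 1
  ring

lemma reflInv_sub (A B : Matrix (Fin 6) (Fin 6) F) : reflInv (A - B) = reflInv A - reflInv B :=
  rfl

lemma reflInv_single (i j : Fin 6) (c : F) : reflInv (single i j c) = single j.rev i.rev c := by
  ext a b
  simp [reflInv, single, Fin.rev_eq_iff, and_comm]

lemma reflInv_single_sub_single_rev (i j : Fin 6) (c : F) :
    reflInv (single i j c - single j.rev i.rev c) = -(single i j c - single j.rev i.rev c) := by
  rw [reflInv_sub, reflInv_single, reflInv_single, Fin.rev_rev, Fin.rev_rev, neg_sub]

end

/-- `[x₁⁻, x₂⁻] ∘ x₃⁻` is a `*`-polynomial identity of `(N, σ_6)`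
but not of `(N, θ_6)`. -/
theorem stmt_13 (F : Type*) [Field F] [CharZero F] :
    (∀ A B C : Matrix (Fin 6) (Fin 6) F, memN A → memN B → memN C →
      sigmaInv A = -A → sigmaInv B = -B → sigmaInv C = -C →
      (A * B - B * A) * C + C * (A * B - B * A) = 0) ∧
    ∃ A B C : Matrix (Fin 6) (Fin 6) F, memN A ∧ memN B ∧ memN C ∧
      reflInv A = -A ∧ reflInv B = -B ∧ reflInv C = -C ∧
      (A * B - B * A) * C + C * (A * B - B * A) ≠ 0 := by
  constructor
  · intro A B C hA hB hC hA' hB' hC'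
    calc (A * B - B * A) * C + C * (A * B - B * A)
        = (A * B * C - C * B * A) - (B * A * C - C * A * B) := by noncomm_ring
      _ = 0 := by
        rw [mul_mul_eq_mul_mul_rev_of_sigmaInv_eq_neg hA hB hC hA' hB' hC',
          mul_mul_eq_mul_mul_rev_of_sigmaInv_eq_neg hB hA hC hB' hA' hC', sub_self, sub_self,
          sub_self]
  · refine ⟨single 0 1 1 - single 4 5 1, single 1 2 1 - single 3 4 1, single 0 3 1 - single 2 5 1,
      ?_, ?_, ?_, reflInv_single_sub_single_rev 0 1 1, reflInv_single_sub_single_rev 1 2 1,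
      reflInv_single_sub_single_rev 0 3 1, fun h => ?_⟩
    iterate 3
      exact ⟨fun i j hij => by simp only [single, of_apply, Matrix.sub_apply]; grind,
        by simp [single]⟩
    simpa [mul_apply, single] using congrFun (congrFun h 0) 5
end

section
/- For (M_{1,1}(E), ◇), the polynomial [x_1^-, x_2^-, x_1^+] is a proper central *-polynomial: for all skew U, V and symmetric W in M_{1,1}(E), [[U,V],W] lies in the center of M_{1,1}(E), and there is a choice of such U, V, W with [[U,V],W] ≠ 0. -/
open Matrix

section Aux

variable {F : Type*} [Field F]

open CliffordAlgebra

lemma aux_ι_semiconj (m v : ℕ →₀ F) :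
    SemiconjBy (ExteriorAlgebra.ι F m) (ExteriorAlgebra.ι F v) (-(ExteriorAlgebra.ι F v)) := by
  have h := ExteriorAlgebra.ι_add_mul_swap (R := F) m v
  unfold SemiconjBy
  rw [neg_mul]
  exact eq_neg_of_add_eq_zero_left h

/-- odd elements anticommute with `ι m` -/
lemma aux_odd_semiconj (m : ℕ →₀ F) {u : GrassmannAlg F} (hu : u ∈ oddPart F) :
    SemiconjBy (ExteriorAlgebra.ι F m) u (-u) := by
  have hu' : u ∈ evenOdd (0 : QuadraticForm F (ℕ →₀ F)) 1 := hu
  induction u, hu' using CliffordAlgebra.odd_induction with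
  | ι v => exact aux_ι_semiconj m v
  | add x y hx hy ihx ihy =>
    simpa only [neg_add] using (ihx hx).add_right (ihy hy)
  | ι_mul_ι_mul m₁ m₂ x hx ih =>
    have h12 := (aux_ι_semiconj m m₁).mul_right (aux_ι_semiconj m m₂)
    rw [neg_mul_neg] at h12
    simpa only [mul_neg] using h12.mul_right (ih hx)

/-- even elements commute with `ι m` -/
lemma aux_even_commute_ι (m : ℕ →₀ F) {a : GrassmannAlg F} (ha : a ∈ evenPart F) :
    Commute (ExteriorAlgebra.ι F m) a := by
  have ha' : a ∈ evenOdd (0 : QuadraticForm F (ℕ →₀ F)) 0 := ha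
  induction a, ha' using CliffordAlgebra.even_induction with
  | algebraMap r => exact Algebra.commutes r _ |>.symm
  | add x y hx hy ihx ihy => exact (ihx hx).add_right (ihy hy)
  | ι_mul_ι_mul m₁ m₂ x hx ih =>
    have h12 := (aux_ι_semiconj m m₁).mul_right (aux_ι_semiconj m m₂)
    rw [neg_mul_neg] at h12
    exact h12.mul_right (ih hx)

/-- even elements are central -/
lemma aux_even_central {a : GrassmannAlg F} (ha : a ∈ evenPart F) (x : GrassmannAlg F) :
    Commute x a := by
  induction x using CliffordAlgebra.induction with
  | algebraMap r => exact Algebra.commutes r _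
  | ι m => exact aux_even_commute_ι m ha
  | mul x y ihx ihy => exact ihx.mul_left ihy
  | add x y ihx ihy => exact ihx.add_left ihy

/-- odd elements anticommute -/
lemma aux_odd_odd {u v : GrassmannAlg F} (hu : u ∈ oddPart F) (hv : v ∈ oddPart F) :
    SemiconjBy u v (-v) := by
  have hu' : u ∈ evenOdd (0 : QuadraticForm F (ℕ →₀ F)) 1 := hu
  induction u, hu' using CliffordAlgebra.odd_induction with
  | ι m => exact aux_odd_semiconj m hv
  | add x y hx hy ihx ihy => exact (ihx hx).add_left (ihy hy)
  | ι_mul_ι_mul m₁ m₂ x hx ih =>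
    have h2 : SemiconjBy (ExteriorAlgebra.ι F m₂) (-v) v := by
      simpa using (aux_odd_semiconj m₂ hv).neg_right
    have h1 : SemiconjBy (ExteriorAlgebra.ι F m₁) v (-v) := aux_odd_semiconj m₁ hv
    simpa only [mul_assoc] using h1.mul_left (h2.mul_left (ih hx))

lemma aux_odd_mul_even {u a : GrassmannAlg F} (hu : u ∈ oddPart F) (ha : a ∈ evenPart F) :
    u * a ∈ oddPart F := by
  have h : ((1 : ZMod 2) + 0) = 1 := by decide
  have h2 := SetLike.mul_mem_graded hu ha
  rw [h] at h2
  exact h2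

lemma aux_even_mul_odd {a u : GrassmannAlg F} (ha : a ∈ evenPart F) (hu : u ∈ oddPart F) :
    a * u ∈ oddPart F := by
  have h : ((0 : ZMod 2) + 1) = 1 := by decide
  have h2 := SetLike.mul_mem_graded ha hu
  rw [h] at h2
  exact h2

lemma aux_odd_mul_odd {u v : GrassmannAlg F} (hu : u ∈ oddPart F) (hv : v ∈ oddPart F) :
    u * v ∈ evenPart F := by
  have h : ((1 : ZMod 2) + 1) = 0 := by decide
  have h2 := SetLike.mul_mem_graded hu hv
  rw [h] at h2
  exact h2

lemma aux_ι_mem_odd (m : ℕ →₀ F) : ExteriorAlgebra.ι F m ∈ oddPart F :=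
  CliffordAlgebra.ι_mem_evenOdd_one _ m

lemma aux_one_mem_even : (1 : GrassmannAlg F) ∈ evenPart F :=
  SetLike.one_mem_graded _

lemma aux_step1 {R : Type*} [Ring R] (a u b v : R) (hab : a * b = b * a) :
    !![a,0;u,-a] * !![b,0;v,-b] - !![b,0;v,-b] * !![a,0;u,-a]
      = !![0,0; u*b - a*v - v*a + b*u, 0] := by
  ext i j
  fin_cases i <;> fin_cases j <;>
    simp [Matrix.mul_apply, Fin.sum_univ_two, hab] <;> noncomm_ring

lemma aux_step2 {R : Type*} [Ring R] (t w s : R) (htw : t * w = w * t)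
    (hst : s * t = -(t * s)) :
    !![0,0;t,0] * !![w,s;0,w] - !![w,s;0,w] * !![0,0;t,0]
      = (t * s) • (1 : Matrix (Fin 2) (Fin 2) R) := by
  ext i j
  fin_cases i <;> fin_cases j <;>
    simp [Matrix.mul_apply, Fin.sum_univ_two, Matrix.one_apply, hst, htw]

/-- An alternating 2-form on `ℕ →₀ F`: determinant of the first two coordinates. -/
noncomputable def auxAlt (F : Type*) [Field F] : (ℕ →₀ F) [⋀^Fin 2]→ₗ[F] F :=
  (Matrix.detRowAlternating).compLinearMap
    (LinearMap.pi fun i : Fin 2 => Finsupp.lapply (i : ℕ))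

noncomputable def auxFam (F : Type*) [Field F] : ∀ i, (ℕ →₀ F) [⋀^Fin i]→ₗ[F] F
  | 2 => auxAlt F
  | 0 => 0
  | 1 => 0
  | (_+3) => 0

lemma aux_ι_mul_ι_ne_zero :
    ExteriorAlgebra.ι F (Finsupp.single 0 1 : ℕ →₀ F) *
      ExteriorAlgebra.ι F (Finsupp.single 1 1 : ℕ →₀ F) ≠ 0 := by
  intro h
  set e0 : ℕ →₀ F := Finsupp.single 0 1 with he0
  set e1 : ℕ →₀ F := Finsupp.single 1 1 with he1
  have h2 : ExteriorAlgebra.ιMulti F 2 ![e0, e1]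
      = ExteriorAlgebra.ι F e0 * ExteriorAlgebra.ι F e1 := by
    simp [ExteriorAlgebra.ιMulti_apply, List.ofFn_succ]
  have h3 := ExteriorAlgebra.liftAlternating_apply_ιMulti (auxFam F) ![e0, e1]
  rw [h2, h, map_zero] at h3
  have h4 : auxFam F 2 ![e0, e1] = 1 := by
    show auxAlt F ![e0, e1] = 1
    rw [auxAlt, AlternatingMap.compLinearMap_apply]
    show Matrix.det (Matrix.of fun i : Fin 2 =>
      (LinearMap.pi (R := F) fun i : Fin 2 => Finsupp.lapply (M := F) (i : ℕ))
        (![e0, e1] i)) = 1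
    rw [Matrix.det_fin_two]
    simp [he0, he1, Finsupp.single_apply]
  rw [h4] at h3
  exact one_ne_zero h3.symm

end Aux

set_option maxHeartbeats 1000000 in
/-- `[x₁⁻, x₂⁻, x₁⁺]` is a proper central `*`-polynomial of
`(M_{1,1}(E), ◇)`: for skew `U, V` and symmetric `W` in `M_{1,1}(E)`, the value
`[[U,V],W]` is a central matrix `(z 0; 0 z)` with `z ∈ E⁽⁰⁾`, and some value is
nonzero. -/
theorem stmt_17 (F : Type*) [Field F] [CharZero F] :
    (∀ U V W : Matrix (Fin 2) (Fin 2) (GrassmannAlg F),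
      memM11 U → memM11 V → memM11 W →
      diaInv U = -U → diaInv V = -V → diaInv W = W →
      ∃ z ∈ evenPart F,
        (U * V - V * U) * W - W * (U * V - V * U) =
          z • (1 : Matrix (Fin 2) (Fin 2) (GrassmannAlg F))) ∧
    ∃ U V W : Matrix (Fin 2) (Fin 2) (GrassmannAlg F),
      memM11 U ∧ memM11 V ∧ memM11 W ∧
      diaInv U = -U ∧ diaInv V = -V ∧ diaInv W = W ∧
      (U * V - V * U) * W - W * (U * V - V * U) ≠ 0 := by
  constructor
  · intro U V W hU hV hW hdU hdV hdW
    obtain ⟨hU00, hU11m, hU01m, hU10⟩ := hU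
    obtain ⟨hV00, hV11m, hV01m, hV10⟩ := hV
    obtain ⟨hW00, hW11m, hW01, hW10m⟩ := hW
    -- entry facts from the involution conditions
    have hU11 : U 1 1 = -(U 0 0) := by simpa [diaInv] using congrFun (congrFun hdU 0) 0
    have hV11 : V 1 1 = -(V 0 0) := by simpa [diaInv] using congrFun (congrFun hdV 0) 0
    have hW11 : W 1 1 = W 0 0 := by
      have h := congrFun (congrFun hdW 0) 0
      simpa [diaInv] using h
    have hU01 : U 0 1 = 0 := by
      have h : U 0 1 = -(U 0 1) := by simpa [diaInv] using congrFun (congrFun hdU 0) 1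
      have h2 : (2 : F) • U 0 1 = 0 := by
        rw [two_smul]; nth_rewrite 2 [h]; exact add_neg_cancel _
      rcases smul_eq_zero.mp h2 with h3 | h3
      · exact absurd h3 two_ne_zero
      · exact h3
    have hV01 : V 0 1 = 0 := by
      have h : V 0 1 = -(V 0 1) := by simpa [diaInv] using congrFun (congrFun hdV 0) 1
      have h2 : (2 : F) • V 0 1 = 0 := by
        rw [two_smul]; nth_rewrite 2 [h]; exact add_neg_cancel _
      rcases smul_eq_zero.mp h2 with h3 | h3
      · exact absurd h3 two_ne_zero
      · exact h3
    have hW10 : W 1 0 = 0 := by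
      have h : -(W 1 0) = W 1 0 := by simpa [diaInv] using congrFun (congrFun hdW 1) 0
      have h2 : (2 : F) • W 1 0 = 0 := by
        rw [two_smul]; nth_rewrite 1 [← h]; exact neg_add_cancel _
      rcases smul_eq_zero.mp h2 with h3 | h3
      · exact absurd h3 two_ne_zero
      · exact h3
    -- the central value
    set t : GrassmannAlg F :=
      U 1 0 * V 0 0 - U 0 0 * V 1 0 - V 1 0 * U 0 0 + V 0 0 * U 1 0 with ht_def
    have ht : t ∈ oddPart F := by
      refine Submodule.add_mem _ (Submodule.sub_mem _ (Submodule.sub_mem _ ?_ ?_) ?_) ?_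
      · exact aux_odd_mul_even hU10 hV00
      · exact aux_even_mul_odd hU00 hV10
      · exact aux_odd_mul_even hV10 hU00
      · exact aux_even_mul_odd hV00 hU10
    refine ⟨t * W 0 1, aux_odd_mul_odd ht hW01, ?_⟩
    have hab : U 0 0 * V 0 0 = V 0 0 * U 0 0 := (aux_even_central hV00 (U 0 0)).eq
    have htw : t * W 0 0 = W 0 0 * t := (aux_even_central hW00 t).eq
    have hst : W 0 1 * t = -(t * W 0 1) := by
      have h := aux_odd_odd hW01 ht
      rwa [SemiconjBy, neg_mul] at h
    have hUeq : U = !![U 0 0, 0; U 1 0, -(U 0 0)] := by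
      conv_lhs => rw [Matrix.eta_fin_two U]
      rw [hU01, hU11]
    have hVeq : V = !![V 0 0, 0; V 1 0, -(V 0 0)] := by
      conv_lhs => rw [Matrix.eta_fin_two V]
      rw [hV01, hV11]
    have hWeq : W = !![W 0 0, W 0 1; 0, W 0 0] := by
      conv_lhs => rw [Matrix.eta_fin_two W]
      rw [hW10, hW11]
    conv_lhs => rw [hUeq, hVeq, hWeq]
    rw [aux_step1 _ _ _ _ hab, ← ht_def]
    exact aux_step2 t (W 0 0) (W 0 1) htw hst
  · -- the nonzero instance
    set p : GrassmannAlg F := ExteriorAlgebra.ι F (Finsupp.single 0 1) with hp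
    set q : GrassmannAlg F := ExteriorAlgebra.ι F (Finsupp.single 1 1) with hq
    refine ⟨!![1,0;0,-1], !![0,0;p,0], !![0,q;0,0], ?_, ?_, ?_, ?_, ?_, ?_, ?_⟩
    · exact ⟨by simpa using aux_one_mem_even,
        by simpa using aux_one_mem_even,
        by simpa using Submodule.zero_mem _,
        by simpa using Submodule.zero_mem _⟩
    · exact ⟨by simpa using Submodule.zero_mem _,
        by simpa using Submodule.zero_mem _,
        by simpa using Submodule.zero_mem _,
        by simpa using aux_ι_mem_odd _⟩
    · exact ⟨by simpa using Submodule.zero_mem _,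
        by simpa using Submodule.zero_mem _,
        by simpa using aux_ι_mem_odd _,
        by simpa using Submodule.zero_mem _⟩
    · ext i j; fin_cases i <;> fin_cases j <;> simp [diaInv]
    · ext i j; fin_cases i <;> fin_cases j <;> simp [diaInv]
    · ext i j; fin_cases i <;> fin_cases j <;> simp [diaInv]
    · intro h
      have h11 := congrFun (congrFun h 1) 1
      simp [Matrix.mul_apply, Fin.sum_univ_two, Matrix.vecHead, Matrix.vecTail] at h11
      -- expect something equivalent to p * q + p * q = 0
      have h2 : (2 : F) • (p * q) = 0 := by
        rw [two_smul, show p * q + p * q = -((-p - p) * q) by noncomm_ring, h11, neg_zero]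
      rcases smul_eq_zero.mp h2 with h3 | h3
      · exact absurd h3 two_ne_zero
      · exact aux_ι_mul_ι_ne_zero h3
end
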